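/- Let a, ν, v, w : ℕ → ℕ satisfy: v 5 ≥ 3, ν 5 ≥ 26, w 7 ≥ 4; for every natural number n with 6 ≤ n ≤ 12: (i) a (n−1) ≥ ν (n−1) + 1; (ii) 2·(n−1)·(v n) ≥ a (n−1) · v (n−1); (iii) ν n + 2·n ≥ 2·ν (n−1) + 5; (iv) ν n ≥ a (n−1) + v n; and for every natural number n with 8 ≤ n ≤ 12: (v) n·(w n) ≥ a (n−1) · w (n−1). Then w 12 ≥ 108374184117028860113. -/
import Mathlib

/-- Lower bound for the number of finite vertices in dimension 12. -/
theorem finite_vertices_dim12 (a ν v w : ℕ → ℕ)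
    (hv5 : 3 ≤ v 5) (hν5 : 26 ≤ ν 5) (hw7 : 4 ≤ w 7)
    (hi : ∀ n : ℕ, 6 ≤ n → n ≤ 12 → ν (n - 1) + 1 ≤ a (n - 1))
    (hii : ∀ n : ℕ, 6 ≤ n → n ≤ 12 → a (n - 1) * v (n - 1) ≤ 2 * (n - 1) * v n)
    (hiii : ∀ n : ℕ, 6 ≤ n → n ≤ 12 → 2 * ν (n - 1) + 5 ≤ ν n + 2 * n)
    (hiv : ∀ n : ℕ, 6 ≤ n → n ≤ 12 → a (n - 1) + v n ≤ ν n)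
    (hv' : ∀ n : ℕ, 8 ≤ n → n ≤ 12 → a (n - 1) * w (n - 1) ≤ n * w n) :
    108374184117028860113 ≤ w 12 := by
  have ha5 : 27 ≤ a 5 := by
    have h := hi 6 (by norm_num) (by norm_num)
    norm_num at h; omega
  have hv6 : 9 ≤ v 6 := by
    have h := hii 6 (by norm_num) (by norm_num)
    norm_num at h
    have h2 : 81 ≤ 2 * 5 * v 6 := le_trans (Nat.mul_le_mul ha5 hv5) h
    omega
  have hν6 : 45 ≤ ν 6 := by
    have h3 := hiii 6 (by norm_num) (by norm_num)
    have h4 := hiv 6 (by norm_num) (by norm_num)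
    norm_num at h3 h4; omega
  have ha6 : 46 ≤ a 6 := by
    have h := hi 7 (by norm_num) (by norm_num)
    norm_num at h; omega
  have hv7 : 35 ≤ v 7 := by
    have h := hii 7 (by norm_num) (by norm_num)
    norm_num at h
    have h2 : 414 ≤ 2 * 6 * v 7 := le_trans (Nat.mul_le_mul ha6 hv6) h
    omega
  have hν7 : 81 ≤ ν 7 := by
    have h3 := hiii 7 (by norm_num) (by norm_num)
    have h4 := hiv 7 (by norm_num) (by norm_num)
    norm_num at h3 h4; omega
  have ha7 : 82 ≤ a 7 := by
    have h := hi 8 (by norm_num) (by norm_num)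
    norm_num at h; omega
  have hv8 : 205 ≤ v 8 := by
    have h := hii 8 (by norm_num) (by norm_num)
    norm_num at h
    have h2 : 2870 ≤ 2 * 7 * v 8 := le_trans (Nat.mul_le_mul ha7 hv7) h
    omega
  have hν8 : 287 ≤ ν 8 := by
    have h3 := hiii 8 (by norm_num) (by norm_num)
    have h4 := hiv 8 (by norm_num) (by norm_num)
    norm_num at h3 h4; omega
  have hw8 : 41 ≤ w 8 := by
    have h := hv' 8 (by norm_num) (by norm_num)
    norm_num at h
    have h2 : 328 ≤ 8 * w 8 := le_trans (Nat.mul_le_mul ha7 hw7) h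
    omega
  have ha8 : 288 ≤ a 8 := by
    have h := hi 9 (by norm_num) (by norm_num)
    norm_num at h; omega
  have hv9 : 3690 ≤ v 9 := by
    have h := hii 9 (by norm_num) (by norm_num)
    norm_num at h
    have h2 : 59040 ≤ 2 * 8 * v 9 := le_trans (Nat.mul_le_mul ha8 hv8) h
    omega
  have hν9 : 3978 ≤ ν 9 := by
    have h3 := hiii 9 (by norm_num) (by norm_num)
    have h4 := hiv 9 (by norm_num) (by norm_num)
    norm_num at h3 h4; omega
  have hw9 : 1312 ≤ w 9 := by
    have h := hv' 9 (by norm_num) (by norm_num)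
    norm_num at h
    have h2 : 11808 ≤ 9 * w 9 := le_trans (Nat.mul_le_mul ha8 hw8) h
    omega
  have ha9 : 3979 ≤ a 9 := by
    have h := hi 10 (by norm_num) (by norm_num)
    norm_num at h; omega
  have hv10 : 815695 ≤ v 10 := by
    have h := hii 10 (by norm_num) (by norm_num)
    norm_num at h
    have h2 : 14682510 ≤ 2 * 9 * v 10 := le_trans (Nat.mul_le_mul ha9 hv9) h
    omega
  have hν10 : 819674 ≤ ν 10 := by
    have h3 := hiii 10 (by norm_num) (by norm_num)
    have h4 := hiv 10 (by norm_num) (by norm_num)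
    norm_num at h3 h4; omega
  have hw10 : 522045 ≤ w 10 := by
    have h := hv' 10 (by norm_num) (by norm_num)
    norm_num at h
    have h2 : 5220448 ≤ 10 * w 10 := le_trans (Nat.mul_le_mul ha9 hw9) h
    omega
  have ha10 : 819675 ≤ a 10 := by
    have h := hi 11 (by norm_num) (by norm_num)
    norm_num at h; omega
  have hv11 : 33430239957 ≤ v 11 := by
    have h := hii 11 (by norm_num) (by norm_num)
    norm_num at h
    have h2 : 668604799125 ≤ 2 * 10 * v 11 := le_trans (Nat.mul_le_mul ha10 hv10) h
    omega
  have hν11 : 33431059632 ≤ ν 11 := by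
    have h3 := hiii 11 (by norm_num) (by norm_num)
    have h4 := hiv 11 (by norm_num) (by norm_num)
    norm_num at h3 h4; omega
  have hw11 : 38900657762 ≤ w 11 := by
    have h := hv' 11 (by norm_num) (by norm_num)
    norm_num at h
    have h2 : 427907235375 ≤ 11 * w 11 := le_trans (Nat.mul_le_mul ha10 hw10) h
    omega
  have ha11 : 33431059633 ≤ a 11 := by
    have h := hi 12 (by norm_num) (by norm_num)
    norm_num at h; omega
  have hv12 : 50800379343089379809 ≤ v 12 := by
    have h := hii 12 (by norm_num) (by norm_num)
    norm_num at h
    have h2 : 1117608345547966355781 ≤ 2 * 11 * v 12 := le_trans (Nat.mul_le_mul ha11 hv11) h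
    omega
  have hν12 : 50800379376520439442 ≤ ν 12 := by
    have h3 := hiii 12 (by norm_num) (by norm_num)
    have h4 := hiv 12 (by norm_num) (by norm_num)
    norm_num at h3 h4; omega
  have hw12 : 108374184117028860113 ≤ w 12 := by
    have h := hv' 12 (by norm_num) (by norm_num)
    norm_num at h
    have h2 : 1300490209404346321346 ≤ 12 * w 12 := le_trans (Nat.mul_le_mul ha11 hw11) h
    omega
  exact hw12
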